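/- For every n ≥ 1, Σ_{σ ∈ 𝔖_n} (−1)^{inv(σ)} s^{exc(σ)} = (1 − s)^{n−1} as polynomials in s (specialization t = 1 of Theorem 1.3). -/

import Mathlib

/-- Number of excedances of a permutation. -/
def excN {n : ℕ} (σ : Equiv.Perm (Fin n)) : ℕ :=
  (Finset.univ.filter fun i : Fin n => i < σ i).card

/-- Depth of a permutation: `∑_{i : σ i > i} (σ i - i)`. -/
def depthN {n : ℕ} (σ : Equiv.Perm (Fin n)) : ℕ :=
  ∑ i ∈ Finset.univ.filter (fun i : Fin n => i < σ i), ((σ i : ℕ) - (i : ℕ))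

/-- Number of inversions of a permutation. -/
def invN {n : ℕ} (σ : Equiv.Perm (Fin n)) : ℕ :=
  (Finset.univ.filter fun p : Fin n × Fin n => p.1 < p.2 ∧ σ p.2 < σ p.1).card

/-!
The sum is the Leibniz expansion of the determinant of the matrix `A` with `A i j = s` below the
diagonal and `1` on and above it: the term of `σ` is `sign σ * ∏ i, A (σ i) i`, where
`sign σ = (-1) ^ inv σ` and `A (σ i) i = s` exactly when `i` is an excedance of `σ`. Subtracting `s` times the first row from every other row
makes `A` upper triangular with diagonal `1, 1 - s, …, 1 - s`.
-/

open Finset Matrix Equiv Perm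

theorem Equiv.Perm.sign_eq_neg_one_pow_invN {n : ℕ} (σ : Perm (Fin n)) :
    sign σ = (-1) ^ invN σ := by
  rw [sign_eq_prod_prod_Ioi, invN, ← prod_const, prod_filter, ← univ_product_univ, prod_product]
  refine prod_congr rfl fun i _ => ?_
  rw [← filter_lt_eq_Ioi, prod_filter]
  refine prod_congr rfl fun j _ => ?_
  have hσ : σ i ≠ σ j ↔ i ≠ j := σ.injective.ne_iff
  split_ifs <;> grind

section ExcedanceMatrix

variable {R : Type*} [CommRing R]

def excedanceMatrix (n : ℕ) (x : R) : Matrix (Fin n) (Fin n) R :=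
  of fun i j => if j < i then x else 1

theorem prod_excedanceMatrix_apply {n : ℕ} (x : R) (σ : Perm (Fin n)) :
    ∏ i, excedanceMatrix n x (σ i) i = x ^ excN σ := by
  simp only [excedanceMatrix, of_apply]
  rw [prod_ite, prod_const, prod_const_one, mul_one, excN]

theorem det_excedanceMatrix_eq_sum (n : ℕ) (x : R) :
    (excedanceMatrix n x).det = ∑ σ : Perm (Fin n), (sign σ : R) * x ^ excN σ := by
  simp only [det_apply, prod_excedanceMatrix_apply, Units.smul_def, zsmul_eq_mul]

theorem det_excedanceMatrix (n : ℕ) (x : R) :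
    (excedanceMatrix (n + 1) x).det = (1 - x) ^ n := by
  let U : Matrix (Fin (n + 1)) (Fin (n + 1)) R :=
    of fun i j => if i ≤ j then (if i = 0 then 1 else 1 - x) else 0
  have hU : U.BlockTriangular id := fun i j hji => if_neg (not_le.mpr hji)
  calc (excedanceMatrix (n + 1) x).det = U.det := by
        refine det_eq_of_forall_row_eq_smul_add_const (fun i => if i = 0 then 0 else x) 0
          (if_pos rfl) fun i j => ?_
        simp only [excedanceMatrix, U, of_apply]
        rcases eq_or_ne i 0 with rfl | hi
        · simp
        · by_cases hji : j < i
          · simp [hji, hi, not_le.mpr hji]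
          · simp [hji, hi, not_lt.mp hji]
    _ = (1 - x) ^ n := by
        rw [det_of_isUpperTriangular hU, Fin.prod_univ_succ]
        simp [U]

end ExcedanceMatrix

open Polynomial in
/-- `∑_σ (−1)^{inv σ} s^{exc σ} = (1 − s)^{n−1}` in `ℤ[s]`. -/
theorem sign_imbalance_exc (n : ℕ) (hn : 1 ≤ n) :
    ∑ σ : Equiv.Perm (Fin n), (C ((-1 : ℤ) ^ invN σ) * X ^ excN σ : Polynomial ℤ) =
      (1 - X) ^ (n - 1) := by
  obtain ⟨m, rfl⟩ := Nat.exists_eq_add_of_le' hn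
  rw [Nat.add_sub_cancel, ← det_excedanceMatrix, det_excedanceMatrix_eq_sum]
  refine sum_congr rfl fun σ _ => ?_
  simp [sign_eq_neg_one_pow_invN]
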